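/- Let Θ_o be the reduced weighted Laplacian of a rooted tree on nodes {0,…,N} (the Laplacian with the row/column of the root removed), with positive edge weights, and let R_o = Θ_o^{-1}. If Θ is any reduced weighted Laplacian of a rooted tree on the same vertex set (with positive edge weights) satisfying Θ^{-1} e_m = R_o e_m for every leaf m of the original tree, then Θ = Θ_o; i.e., the tree structure and all edge weights are identical. -/
import Mathlib


open scoped Classical

/-- A finite rooted tree encoded by a parent function: every node reaches the
root by iterating `parent`, and the root is its own parent. -/
structure GridTree (V : Type) [Fintype V] [DecidableEq V] where
  root : V
  parent : V → V
  parent_root : parent root = root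
  reaches : ∀ v, ∃ k, parent^[k] v = root

namespace GridTree

variable {V : Type} [Fintype V] [DecidableEq V]

/-- Depth of a node: distance (number of edges) to the root. -/
noncomputable def depth (T : GridTree V) (v : V) : ℕ := Nat.find (T.reaches v)

/-- The depth-`k` ancestor `α_v^k` of `v` (for `k ≤ depth v`). -/
noncomputable def anc (T : GridTree V) (v : V) (k : ℕ) : V :=
  T.parent^[T.depth v - k] v

/-- Ancestor set `A_v`: all nodes on the path from the root to `v`, including `v`. -/
def ancSet (T : GridTree V) (v : V) : Set V := {u | ∃ j, T.parent^[j] v = u}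

/-- Descendant set `D_n`: all nodes whose ancestor set contains `n`. -/
def desc (T : GridTree V) (n : V) : Set V := {m | n ∈ T.ancSet m}

/-- The `k`-th level set `N_m^k` of node `m`. -/
noncomputable def level (T : GridTree V) (m : V) (k : ℕ) : Set V :=
  if k = T.depth m then T.desc m
  else T.desc (T.anc m k) \ T.desc (T.anc m (k + 1))

/-- A leaf: a node with no descendants other than itself. -/
def IsLeaf (T : GridTree V) (m : V) : Prop := T.desc m = {m}

/-- Path-resistance matrix: `R m n` is the sum of the resistances of edges with
both endpoints in `A_m ∩ A_n`.  The edge above a non-root node `c` (joining `c`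
to its parent) has resistance `r c`. -/
noncomputable def Rmat (T : GridTree V) (r : V → ℝ) (m n : V) : ℝ :=
  ∑ c : V, if c ∈ T.ancSet m ∧ c ∈ T.ancSet n ∧ c ≠ T.root then r c else 0

end GridTree

namespace GridTree

variable {V : Type} [Fintype V] [DecidableEq V]

variable (T : GridTree V) {u v w m n : V}

lemma iterate_parent_root (k : ℕ) : T.parent^[k] T.root = T.root :=
  Function.iterate_fixed T.parent_root k

lemma depth_spec (v : V) : T.parent^[T.depth v] v = T.root :=
  Nat.find_spec (T.reaches v)

lemma depth_le {j : ℕ} (h : T.parent^[j] v = T.root) : T.depth v ≤ j :=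
  Nat.find_le h

lemma depth_eq_zero_iff : T.depth v = 0 ↔ v = T.root := by
  rw [depth, Nat.find_eq_zero]; rfl

lemma depth_parent (v : V) : T.depth (T.parent v) = T.depth v - 1 := by
  by_cases h : v = T.root
  · subst h
    rw [T.parent_root]
    simp [T.depth_eq_zero_iff.2 rfl]
  · have hd : T.depth v ≠ 0 := fun hz => h (T.depth_eq_zero_iff.1 hz)
    have h1 : T.parent^[T.depth v - 1] (T.parent v) = T.root := by
      have h := T.depth_spec v
      rw [show T.depth v = (T.depth v - 1) + 1 by omega,
        Function.iterate_succ_apply] at h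
      exact h
    have h2 : T.depth (T.parent v) ≤ T.depth v - 1 := T.depth_le h1
    have h3 : T.parent^[T.depth (T.parent v) + 1] v = T.root := by
      rw [Function.iterate_succ_apply]; exact T.depth_spec (T.parent v)
    have h4 : T.depth v ≤ T.depth (T.parent v) + 1 := T.depth_le h3
    omega

lemma depth_iterate (v : V) (j : ℕ) : T.depth (T.parent^[j] v) = T.depth v - j := by
  induction j with
  | zero => simp
  | succ j ih =>
      rw [Function.iterate_succ_apply', depth_parent, ih]
      omega

lemma mem_ancSet_self : v ∈ T.ancSet v := ⟨0, rfl⟩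

lemma root_mem_ancSet : T.root ∈ T.ancSet v := ⟨T.depth v, T.depth_spec v⟩

lemma ancSet_trans (h1 : u ∈ T.ancSet w) (h2 : w ∈ T.ancSet v) : u ∈ T.ancSet v := by
  obtain ⟨i, hi⟩ := h1
  obtain ⟨j, hj⟩ := h2
  exact ⟨i + j, by rw [Function.iterate_add_apply, hj, hi]⟩

lemma depth_le_of_mem (h : u ∈ T.ancSet v) : T.depth u ≤ T.depth v := by
  obtain ⟨j, hj⟩ := h
  rw [← hj, depth_iterate]; omega

lemma eq_of_mem_depth (h : u ∈ T.ancSet v) (hd : T.depth v ≤ T.depth u) : u = v := by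
  obtain ⟨j, hj⟩ := h
  have hdj : T.depth (T.parent^[j] v) = T.depth v - j := T.depth_iterate v j
  rw [hj] at hdj
  rcases Nat.eq_zero_or_pos j with hj0 | hj0
  · subst hj0; simpa using hj.symm
  · have hv0 : T.depth v = 0 := by omega
    have hv : v = T.root := T.depth_eq_zero_iff.1 hv0
    rw [← hj, hv, iterate_parent_root]

lemma ancSet_antisymm (h1 : u ∈ T.ancSet v) (h2 : v ∈ T.ancSet u) : u = v :=
  T.eq_of_mem_depth h1 (T.depth_le_of_mem h2)

lemma ancSet_comparable (hu : u ∈ T.ancSet m) (hw : w ∈ T.ancSet m) :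
    u ∈ T.ancSet w ∨ w ∈ T.ancSet u := by
  obtain ⟨i, hi⟩ := hu
  obtain ⟨j, hj⟩ := hw
  rcases le_total i j with hij | hij
  · right
    refine ⟨j - i, ?_⟩
    rw [← hi, ← Function.iterate_add_apply]
    have : j - i + i = j := by omega
    rw [this, hj]
  · left
    refine ⟨i - j, ?_⟩
    rw [← hj, ← Function.iterate_add_apply]
    have : i - j + j = i := by omega
    rw [this, hi]

lemma mem_parent (h : u ∈ T.ancSet v) (hne : u ≠ v) : u ∈ T.ancSet (T.parent v) := by
  obtain ⟨j, hj⟩ := h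
  have hj0 : j ≠ 0 := by rintro rfl; exact hne hj.symm
  rw [show j = (j - 1) + 1 by omega, Function.iterate_succ_apply] at hj
  exact ⟨j - 1, hj⟩

lemma parent_mem : T.parent v ∈ T.ancSet v := ⟨1, rfl⟩

lemma parent_ne (h : v ≠ T.root) : T.parent v ≠ v := by
  intro he
  have hk : ∀ k, T.parent^[k] v = v := by
    intro k
    induction k with
    | zero => rfl
    | succ k ih => rw [Function.iterate_succ_apply', ih, he]
  obtain ⟨k, hk'⟩ := T.reaches v
  rw [hk k] at hk'
  exact h hk'

lemma mem_ancSet_root (h : u ∈ T.ancSet T.root) : u = T.root := by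
  obtain ⟨j, hj⟩ := h
  rw [← hj, iterate_parent_root]

noncomputable def pathRes (T : GridTree V) (r : V → ℝ) (v : V) : ℝ :=
  ∑ c : V, if c ∈ T.ancSet v ∧ c ≠ T.root then r c else 0

lemma pathRes_root (r : V → ℝ) : T.pathRes r T.root = 0 := by
  apply Finset.sum_eq_zero
  intro c _
  rw [if_neg]
  rintro ⟨hc, hne⟩
  exact hne (T.mem_ancSet_root hc)

lemma pathRes_lt {r : V → ℝ} (hr : ∀ c, c ≠ T.root → 0 < r c)
    (h : u ∈ T.ancSet v) (hne : u ≠ v) : T.pathRes r u < T.pathRes r v := by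
  have hvroot : v ≠ T.root := by
    rintro rfl
    exact hne (T.mem_ancSet_root h)
  apply Finset.sum_lt_sum
  · intro c _
    by_cases hc : c ∈ T.ancSet u ∧ c ≠ T.root
    · rw [if_pos hc, if_pos ⟨T.ancSet_trans hc.1 h, hc.2⟩]
    · rw [if_neg hc]
      by_cases hc2 : c ∈ T.ancSet v ∧ c ≠ T.root
      · rw [if_pos hc2]; exact le_of_lt (hr c hc2.2)
      · rw [if_neg hc2]
  · refine ⟨v, Finset.mem_univ v, ?_⟩
    have hvu : v ∉ T.ancSet u := fun hvu => hne (T.ancSet_antisymm h hvu)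
    rw [if_neg (fun hp => hvu hp.1), if_pos ⟨T.mem_ancSet_self, hvroot⟩]
    exact hr v hvroot

lemma pathRes_le {r : V → ℝ} (hr : ∀ c, c ≠ T.root → 0 < r c)
    (h : u ∈ T.ancSet v) : T.pathRes r u ≤ T.pathRes r v := by
  rcases eq_or_ne u v with rfl | hne
  · exact le_refl _
  · exact le_of_lt (T.pathRes_lt hr h hne)

lemma eq_of_mem_pathRes {r : V → ℝ} (hr : ∀ c, c ≠ T.root → 0 < r c)
    (h : u ∈ T.ancSet v) (he : T.pathRes r v ≤ T.pathRes r u) : u = v := by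
  by_contra hne
  exact absurd (T.pathRes_lt hr h hne) (not_lt.2 he)

lemma pathRes_parent {r : V → ℝ} (hv : v ≠ T.root) :
    T.pathRes r v = T.pathRes r (T.parent v) + r v := by
  have hvu : v ∉ T.ancSet (T.parent v) := by
    intro h
    exact T.parent_ne hv (T.ancSet_antisymm T.parent_mem h)
  have hsum : T.pathRes r v = ∑ c : V,
      ((if c ∈ T.ancSet (T.parent v) ∧ c ≠ T.root then r c else 0)
        + (if c = v then r v else 0)) := by
    apply Finset.sum_congr rfl
    intro c _
    by_cases hcv : c = v
    · subst hcv
      rw [if_pos ⟨T.mem_ancSet_self, hv⟩, if_neg (fun hp => hvu hp.1), if_pos rfl]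
      ring
    · rw [if_neg hcv, add_zero]
      by_cases hc : c ∈ T.ancSet v ∧ c ≠ T.root
      · rw [if_pos hc, if_pos ⟨T.mem_parent hc.1 hcv, hc.2⟩]
      · rw [if_neg hc, if_neg]
        rintro ⟨h1, h2⟩
        exact hc ⟨T.ancSet_trans h1 T.parent_mem, h2⟩
  rw [hsum, Finset.sum_add_distrib]
  congr 1
  simp

lemma Rmat_of_mem (r : V → ℝ) (h : n ∈ T.ancSet m) :
    T.Rmat r n m = T.pathRes r n := by
  apply Finset.sum_congr rfl
  intro c _
  by_cases hc : c ∈ T.ancSet n ∧ c ≠ T.root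
  · rw [if_pos ⟨hc.1, T.ancSet_trans hc.1 h, hc.2⟩, if_pos hc]
  · rw [if_neg (fun hp => hc ⟨hp.1, hp.2.2⟩), if_neg hc]

lemma exists_meet (r : V → ℝ) (n m : V) :
    ∃ w, w ∈ T.ancSet n ∧ w ∈ T.ancSet m ∧
      (∀ c, c ∈ T.ancSet n → c ∈ T.ancSet m → c ∈ T.ancSet w) ∧
      T.Rmat r n m = T.pathRes r w := by
  have hex : ∃ j, T.parent^[j] m ∈ T.ancSet n := ⟨T.depth m, by
    rw [T.depth_spec m]; exact T.root_mem_ancSet⟩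
  set k := Nat.find hex with hk
  refine ⟨T.parent^[k] m, Nat.find_spec hex, ⟨k, rfl⟩, ?_, ?_⟩
  · intro c hcn hcm
    obtain ⟨j, hj⟩ := hcm
    have hkj : k ≤ j := by
      by_contra hlt
      have hjk : j < k := by omega
      exact (Nat.find_min hex hjk) (by rw [hj]; exact hcn)
    refine ⟨j - k, ?_⟩
    rw [← Function.iterate_add_apply]
    have : j - k + k = j := by omega
    rw [this, hj]
  · apply Finset.sum_congr rfl
    intro c _
    have hwn : T.parent^[k] m ∈ T.ancSet n := Nat.find_spec hex
    by_cases hc : c ∈ T.ancSet n ∧ c ∈ T.ancSet m ∧ c ≠ T.root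
    · rw [if_pos hc]
      rw [if_pos]
      constructor
      · -- c ∈ ancSet of meet
        obtain ⟨j, hj⟩ := hc.2.1
        have hkj : k ≤ j := by
          by_contra hlt
          have hjk : j < k := by omega
          exact (Nat.find_min hex hjk) (by rw [hj]; exact hc.1)
        refine ⟨j - k, ?_⟩
        rw [← Function.iterate_add_apply]
        have : j - k + k = j := by omega
        rw [this, hj]
      · exact hc.2.2
    · rw [if_neg hc, if_neg]
      rintro ⟨h1, h2⟩
      exact hc ⟨T.ancSet_trans h1 hwn, T.ancSet_trans h1 ⟨k, rfl⟩, h2⟩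

lemma exists_leaf (v : V) : ∃ m, T.IsLeaf m ∧ v ∈ T.ancSet m := by
  classical
  have hne : (Finset.univ.filter (fun x => v ∈ T.ancSet x)).Nonempty :=
    ⟨v, by simp [T.mem_ancSet_self]⟩
  obtain ⟨m, hm, hmax⟩ := Finset.exists_max_image _ T.depth hne
  simp only [Finset.mem_filter, Finset.mem_univ, true_and] at hm
  refine ⟨m, ?_, hm⟩
  ext x
  simp only [desc, Set.mem_setOf_eq, Set.mem_singleton_iff]
  constructor
  · intro hx
    have hvx : v ∈ T.ancSet x := T.ancSet_trans hm hx
    have hxS : x ∈ Finset.univ.filter (fun x => v ∈ T.ancSet x) := by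
      simp [hvx]
    have := hmax x hxS
    exact (T.eq_of_mem_depth hx this).symm
  · rintro rfl
    exact T.mem_ancSet_self


theorem stmt9' (T T' : GridTree V)
    (hroot : T.root = T'.root)
    (r r' : V → ℝ)
    (hr : ∀ c, c ≠ T.root → 0 < r c) (hr' : ∀ c, c ≠ T'.root → 0 < r' c)
    (hcol : ∀ m, T.IsLeaf m → ∀ n, T.Rmat r n m = T'.Rmat r' n m) :
    T.parent = T'.parent ∧ ∀ c, c ≠ T.root → r c = r' c := by
  have key : ∀ d v, T.depth v = d →
      T'.pathRes r' v = T.pathRes r v ∧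
      (v ≠ T.root → T'.parent v = T.parent v ∧ r' v = r v) := by
    intro d
    induction d using Nat.strong_induction_on with
    | _ d IH =>
      intro v hdv
      subst hdv
      by_cases hv : v = T.root
      · subst hv
        refine ⟨?_, fun h => absurd rfl h⟩
        have h1 : T'.pathRes r' T.root = 0 := by rw [hroot]; exact T'.pathRes_root r'
        rw [h1, T.pathRes_root r]
      · set u := T.parent v with hu
        have humem : u ∈ T.ancSet v := T.parent_mem
        have hune : u ≠ v := T.parent_ne hv
        have hd0 : T.depth v ≠ 0 := fun h => hv (T.depth_eq_zero_iff.1 h)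
        have hdu : T.depth u < T.depth v := by
          have := T.depth_parent v
          rw [← hu] at this
          omega
        obtain ⟨hρu, -⟩ := IH (T.depth u) hdu u rfl
        obtain ⟨m, hmleaf, hvm⟩ := T.exists_leaf v
        have hum : u ∈ T.ancSet m := T.ancSet_trans humem hvm
        -- (a) u is a T'-ancestor of m
        have hu'm : u ∈ T'.ancSet m := by
          obtain ⟨w', hw'u, hw'm, -, hRw'⟩ := T'.exists_meet r' u m
          have h1 : T'.pathRes r' w' = T'.pathRes r' u := by
            rw [← hRw', ← hcol m hmleaf u, T.Rmat_of_mem r hum, ← hρu]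
          have h2 : w' = u := T'.eq_of_mem_pathRes hr' hw'u (le_of_eq h1.symm)
          rwa [h2] at hw'm
        -- helper: T'-meets of v with T-leaves above v carry path resistance ρ v
        have hmeet : ∀ m₀, T.IsLeaf m₀ → v ∈ T.ancSet m₀ →
            ∃ w, w ∈ T'.ancSet v ∧ w ∈ T'.ancSet m₀ ∧
              T'.pathRes r' w = T.pathRes r v := by
          intro m₀ hl hvm₀
          obtain ⟨w, hwv, hwm, -, hRw⟩ := T'.exists_meet r' v m₀
          exact ⟨w, hwv, hwm, by rw [← hRw, ← hcol m₀ hl v, T.Rmat_of_mem r hvm₀]⟩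
        obtain ⟨w, hwv, hwm, hρw⟩ := hmeet m hmleaf hvm
        -- (c) v is a T-ancestor of w
        have hvw : v ∈ T.ancSet w := by
          obtain ⟨z, hzw, hzm, -, hRz⟩ := T.exists_meet r w m
          have h1 : T.pathRes r z = T.pathRes r v := by
            rw [← hRz, hcol m hmleaf w, T'.Rmat_of_mem r' hwm, hρw]
          have hzv : z = v := by
            rcases T.ancSet_comparable hzm hvm with h | h
            · exact T.eq_of_mem_pathRes hr h (le_of_eq h1.symm)
            · exact (T.eq_of_mem_pathRes hr h (le_of_eq h1)).symm
          rw [← hzv]; exact hzw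
        -- (d) w = v
        have hwv2 : w = v := by
          obtain ⟨m₁, hm₁leaf, hwm₁⟩ := T.exists_leaf w
          have hvm₁ : v ∈ T.ancSet m₁ := T.ancSet_trans hvw hwm₁
          obtain ⟨w₁, hw₁v, hw₁m₁, hρw₁⟩ := hmeet m₁ hm₁leaf hvm₁
          have hww₁ : w = w₁ := by
            rcases T'.ancSet_comparable hwv hw₁v with h | h
            · exact T'.eq_of_mem_pathRes hr' h (by rw [hρw, hρw₁])
            · exact (T'.eq_of_mem_pathRes hr' h (by rw [hρw, hρw₁])).symm
          have hwm₁' : w ∈ T'.ancSet m₁ := by rw [hww₁]; exact hw₁m₁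
          have h2 : T.pathRes r w = T.pathRes r v := by
            rw [← T.Rmat_of_mem r hwm₁, hcol m₁ hm₁leaf w,
              T'.Rmat_of_mem r' hwm₁', hρw]
          exact (T.eq_of_mem_pathRes hr hvw (le_of_eq h2)).symm
        rw [hwv2] at hρw hwm
        have hρv : T'.pathRes r' v = T.pathRes r v := hρw
        have hv'm : v ∈ T'.ancSet m := hwm
        -- (e) identify the parent
        have hρuv : T.pathRes r u < T.pathRes r v := T.pathRes_lt hr humem hune
        have hu'v : u ∈ T'.ancSet v := by
          rcases T'.ancSet_comparable hu'm hv'm with h | h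
          · exact h
          · exfalso
            have h2 := T'.pathRes_le hr' h
            rw [hρv, hρu] at h2
            exact absurd h2 (not_le.2 hρuv)
        have hvroot' : v ≠ T'.root := by rw [← hroot]; exact hv
        set p := T'.parent v with hp
        have hpne : p ≠ v := T'.parent_ne hvroot'
        have hpv : p ∈ T'.ancSet v := T'.parent_mem
        have hup : u ∈ T'.ancSet p := T'.mem_parent hu'v hune
        have hpm : p ∈ T'.ancSet m := T'.ancSet_trans hpv hv'm
        obtain ⟨z, hzp, hzm, -, hRz⟩ := T.exists_meet r p m
        have hρz : T.pathRes r z = T'.pathRes r' p := by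
          rw [← hRz, hcol m hmleaf p, T'.Rmat_of_mem r' hpm]
        have hzlt : T.pathRes r z < T.pathRes r v := by
          rw [hρz, ← hρv]; exact T'.pathRes_lt hr' hpv hpne
        have huz : T.pathRes r u ≤ T.pathRes r z := by
          rw [hρz, ← hρu]; exact T'.pathRes_le hr' hup
        have hzv : z ∈ T.ancSet v := by
          rcases T.ancSet_comparable hzm hvm with h | h
          · exact h
          · exact absurd (T.pathRes_le hr h) (not_le.2 hzlt)
        have hzne : z ≠ v := by
          intro he; rw [he] at hzlt; exact lt_irrefl _ hzlt
        have hzu : z ∈ T.ancSet u := T.mem_parent hzv hzne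
        have hz_eq_u : z = u := T.eq_of_mem_pathRes hr hzu huz
        have hpu : u = p := by
          apply T'.eq_of_mem_pathRes hr' hup
          rw [← hρz, hz_eq_u, ← hρu]
        refine ⟨hρv, fun _ => ⟨hpu.symm, ?_⟩⟩
        have e1 : T.pathRes r v = T.pathRes r u + r v := T.pathRes_parent hv
        have e2 : T'.pathRes r' v = T'.pathRes r' p + r' v := T'.pathRes_parent hvroot'
        rw [← hpu, hρv, hρu] at e2
        linarith
  constructor
  · funext v
    by_cases hv : v = T.root
    · subst hv
      rw [T.parent_root, hroot, T'.parent_root]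
    · exact ((key (T.depth v) v rfl).2 hv).1.symm
  · intro c hc
    exact (((key (T.depth c) c rfl).2 hc).2).symm

end GridTree

/-- Theorem 1 (identifiability): if the columns of the path-resistance matrix
indexed by all leaves of the original tree coincide for two rooted trees with
positive resistances, then the two trees have identical structure and
identical edge resistances. -/
theorem stmt9 {V : Type} [Fintype V] [DecidableEq V] (T T' : GridTree V)
    (hroot : T.root = T'.root)
    (r r' : V → ℝ)
    (hr : ∀ c, c ≠ T.root → 0 < r c) (hr' : ∀ c, c ≠ T'.root → 0 < r' c)
    (hcol : ∀ m, T.IsLeaf m → ∀ n, T.Rmat r n m = T'.Rmat r' n m) :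
    T.parent = T'.parent ∧ ∀ c, c ≠ T.root → r c = r' c := by
  exact GridTree.stmt9' T T' hroot r r' hr hr' hcol
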